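/- Let X be a compact metric space and let FS∼ be the finest closed equivalence relation respecting the family of all limit continua of X. Then the quotient X/FS∼ is finitely Suslinian. -/

import Mathlib

open Set Filter Metric Topology Function

/-- A relation on a topological space is closed if its graph is closed. -/
def ClosedRel {Y : Type*} [TopologicalSpace Y] (r : Y → Y → Prop) : Prop :=
  IsClosed {p : Y × Y | r p.1 p.2}

/-- A relation respects a family `A` of subsets if it is closed and each member of `A`
is contained in a single class. -/
def Respects {Y : Type*} [TopologicalSpace Y] (A : Set (Set Y)) (r : Y → Y → Prop) : Prop :=
  ClosedRel r ∧ ∀ a ∈ A, ∀ x ∈ a, ∀ y ∈ a, r x y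

/-- The finest closed equivalence relation respecting `A`: the intersection of all
closed equivalence relations respecting `A`. -/
def finestRel {Y : Type*} [TopologicalSpace Y] (A : Set (Set Y)) : Y → Y → Prop :=
  fun x y => ∀ r : Y → Y → Prop, Equivalence r → Respects A r → r x y

/-- A limit continuum: a subcontinuum which is the Hausdorff limit of a sequence of
pairwise disjoint subcontinua. -/
def IsLimCont {Y : Type*} [MetricSpace Y] (C : Set Y) : Prop :=
  IsCompact C ∧ IsConnected C ∧
  ∃ F : ℕ → Set Y, (∀ n, IsCompact (F n) ∧ IsConnected (F n)) ∧
    Pairwise (Disjoint on F) ∧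
    Tendsto (fun n => EMetric.hausdorffEdist (F n) C) atTop (nhds 0)

/-- Finitely Suslinian: every family of pairwise disjoint subcontinua of diameter at least
`ε > 0` is finite. -/
def FinSus (Y : Type*) [MetricSpace Y] : Prop :=
  ∀ ε : ℝ, 0 < ε → ∀ S : Set (Set Y),
    (∀ C ∈ S, IsCompact C ∧ IsConnected C ∧ ε ≤ Metric.diam C) →
    S.Pairwise Disjoint → S.Finite

/-- A subcontinuum of the subset `Z`. -/
def SubcontIn {E : Type*} [MetricSpace E] (Z C : Set E) : Prop :=
  C ⊆ Z ∧ IsCompact C ∧ IsConnected C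

/-- A limit continuum of the subset `Z`. -/
def LimContIn {E : Type*} [MetricSpace E] (Z C : Set E) : Prop :=
  SubcontIn Z C ∧ ∃ F : ℕ → Set E, (∀ n, SubcontIn Z (F n)) ∧
    Pairwise (Disjoint on F) ∧
    Tendsto (fun n => EMetric.hausdorffEdist (F n) C) atTop (nhds 0)

/-- The subset `Z` is finitely Suslinian. -/
def FinSusIn {E : Type*} [MetricSpace E] (Z : Set E) : Prop :=
  ∀ ε : ℝ, 0 < ε → ∀ S : Set (Set E),
    (∀ C ∈ S, SubcontIn Z C ∧ ε ≤ Metric.diam C) → S.Pairwise Disjoint → S.Finite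

/-- A planar compactum is unshielded if it is the boundary of the unbounded component of
its complement. -/
def Unshielded (X : Set ℂ) : Prop :=
  ∀ z, z ∉ X → ¬Bornology.IsBounded (connectedComponentIn Xᶜ z) →
    X = frontier (connectedComponentIn Xᶜ z)

/-!
Each class of `finestRel A`, for `A` a family of preconnected sets in a compact metric space, is
connected: "lying in the same component of the same class" is again a closed equivalence relation
respecting `A` (closedness because Hausdorff limits of connected sets are connected), so by
minimality it is `finestRel A` itself. Thus `m` is monotone and the preimages of infinitely many
disjoint continua of `Y` of diameter `≥ ε` are disjoint continua of `X`. A subsequence of them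
converges to a limit continuum `C`; lifting pairs of points at distance `> ε / 2` and passing to
the limit gives two points of `C` whose images are still `ε / 2` apart, although `m` is constant
on `C`.
-/

section HausdorffConvergence

variable {α β ι : Type*} [PseudoEMetricSpace α] [PseudoEMetricSpace β] {l : Filter ι}
  {F : ι → Set α} {C : Set α}

lemma mem_of_tendsto_hausdorffEDist [l.NeBot] (hC : IsClosed C)
    (hF : Tendsto (fun n => hausdorffEDist (F n) C) l (𝓝 0))
    {x : ι → α} {a : α} (hx : ∀ n, x n ∈ F n) (ha : Tendsto x l (𝓝 a)) : a ∈ C := by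
  have h₀ : Tendsto (fun n => infEDist (x n) C) l (𝓝 0) :=
    tendsto_of_tendsto_of_tendsto_of_le_of_le tendsto_const_nhds hF (fun _ => zero_le)
      fun n => infEDist_le_hausdorffEDist_of_mem (hx n)
  have ha₀ : infEDist a C = 0 :=
    tendsto_nhds_unique ((continuous_infEDist.tendsto a).comp ha) h₀
  exact (mem_iff_infEDist_zero_of_closed hC).2 ha₀

lemma subset_of_tendsto_hausdorffEDist [l.NeBot] {S : Set α} (hS : IsClosed S)
    (hFS : ∀ n, F n ⊆ S)
    (hF : Tendsto (fun n => hausdorffEDist (F n) C) l (𝓝 0)) : C ⊆ S := by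
  intro z hz
  refine (mem_iff_infEDist_zero_of_closed hS).2 (nonpos_iff_eq_zero.1 (ge_of_tendsto' hF ?_))
  intro n
  calc infEDist z S ≤ infEDist z (F n) := infEDist_anti (hFS n)
    _ ≤ hausdorffEDist C (F n) := infEDist_le_hausdorffEDist_of_mem hz
    _ = hausdorffEDist (F n) C := hausdorffEDist_comm

lemma tendsto_hausdorffEDist_singleton_prod {x : ι → β} {a : β} (hx : Tendsto x l (𝓝 a))
    (hF : Tendsto (fun n => hausdorffEDist (F n) C) l (𝓝 0)) :
    Tendsto (fun n => hausdorffEDist ({x n} ×ˢ F n) ({a} ×ˢ C)) l (𝓝 0) := by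
  have hmax : Tendsto (fun n => max (edist (x n) a) (hausdorffEDist (F n) C)) l (𝓝 0) := by
    simpa using (tendsto_iff_edist_tendsto_0.1 hx).max hF
  refine tendsto_of_tendsto_of_tendsto_of_le_of_le tendsto_const_nhds hmax (fun _ => zero_le)
    fun n => ?_
  rw [← hausdorffEDist_singleton]
  exact hausdorffEDist_prod_le

end HausdorffConvergence

lemma subset_thickening_of_hausdorffEDist_lt {α : Type*} [PseudoMetricSpace α] {s t : Set α}
    {δ : ℝ} (h : hausdorffEDist s t < ENNReal.ofReal δ) : s ⊆ thickening δ t :=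
  fun _ hx => mem_thickening_iff_infEDist_lt.2 ((infEDist_le_hausdorffEDist_of_mem hx).trans_lt h)

/-- Two disjoint closed pieces of the limit have disjoint `δ`-neighbourhoods, which would split
any set `δ`-close to the limit. -/
lemma isPreconnected_of_tendsto_hausdorffEDist {α ι : Type*} [MetricSpace α]
    {l : Filter ι} [l.NeBot] {F : ι → Set α} {C : Set α} (hF : ∀ n, IsPreconnected (F n))
    (hC : IsCompact C) (hFC : Tendsto (fun n => hausdorffEDist (F n) C) l (𝓝 0)) :
    IsPreconnected C := by
  rw [isPreconnected_closed_iff]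
  intro u v hu hv hCuv ⟨c, hcC, hcu⟩ ⟨d, hdC, hdv⟩
  by_contra hdisj
  have hdisj' : Disjoint (C ∩ u) (C ∩ v) :=
    Set.disjoint_left.2 fun z ⟨hzC, hzu⟩ ⟨_, hzv⟩ => hdisj ⟨z, hzC, hzu, hzv⟩
  obtain ⟨δ, hδ, hδdisj⟩ :=
    hdisj'.exists_thickenings (hC.inter_right hu) (hC.isClosed.inter hv)
  obtain ⟨n, hn⟩ := (hFC.eventually_lt_const (ENNReal.ofReal_pos.2 hδ)).exists
  have hFn : F n ⊆ thickening δ (C ∩ u) ∪ thickening δ (C ∩ v) := by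
    rw [← thickening_union, ← inter_union_distrib_left, inter_eq_left.2 hCuv]
    exact subset_thickening_of_hausdorffEDist_lt hn
  have hmeet : ∀ {w : Set α} {e : α}, e ∈ C → e ∈ w →
      (F n ∩ thickening δ (C ∩ w)).Nonempty := by
    intro w e heC hew
    rw [hausdorffEDist_comm] at hn
    obtain ⟨z, hzF, hez⟩ := mem_thickening_iff.1 (subset_thickening_of_hausdorffEDist_lt hn heC)
    exact ⟨z, hzF, mem_thickening_iff.2 ⟨e, ⟨heC, hew⟩, by rwa [dist_comm]⟩⟩
  obtain ⟨z, -, hzu, hzv⟩ := hF n _ _ isOpen_thickening isOpen_thickening hFn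
    (hmeet hcC hcu) (hmeet hdC hdv)
  exact hδdisj.le_bot ⟨hzu, hzv⟩

lemma exists_subseq_tendsto_hausdorffEDist {α : Type*} [EMetricSpace α] [CompactSpace α]
    {F : ℕ → Set α} (hF : ∀ n, IsClosed (F n)) (hne : ∀ n, (F n).Nonempty) :
    ∃ C : Set α, IsCompact C ∧ ∃ φ : ℕ → ℕ, StrictMono φ ∧
      Tendsto (fun n => hausdorffEDist (F (φ n)) C) atTop (𝓝 0) := by
  let G : ℕ → TopologicalSpace.NonemptyCompacts α := fun n =>
    ⟨⟨F n, (hF n).isCompact⟩, hne n⟩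
  obtain ⟨L, φ, hφ, hL⟩ := CompactSpace.tendsto_subseq G
  exact ⟨L, L.isCompact, φ, hφ, tendsto_iff_edist_tendsto_0.1 hL⟩

lemma IsClosed.connectedComponentIn {X : Type*} [TopologicalSpace X] {F : Set X}
    (hF : IsClosed F) (x : X) : IsClosed (connectedComponentIn F x) := by
  by_cases hx : x ∈ F
  · refine closure_subset_iff_isClosed.1 ?_
    exact isPreconnected_connectedComponentIn.closure.subset_connectedComponentIn
      (subset_closure (mem_connectedComponentIn hx))
      (closure_minimal (connectedComponentIn_subset F x) hF)
  · rw [connectedComponentIn_eq_empty hx]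
    exact isClosed_empty

section FinestRel

variable {X : Type*} [TopologicalSpace X]

lemma equivalence_finestRel (A : Set (Set X)) : Equivalence (finestRel A) where
  refl x _ hr _ := hr.refl x
  symm h r hr hA := hr.symm (h r hr hA)
  trans h₁ h₂ r hr hA := hr.trans (h₁ r hr hA) (h₂ r hr hA)

lemma closedRel_finestRel (A : Set (Set X)) : ClosedRel (finestRel A) := by
  have h : {p : X × X | finestRel A p.1 p.2} =
      ⋂ (r : X → X → Prop) (_ : Equivalence r) (_ : Respects A r), {p | r p.1 p.2} := by
    ext p
    simp only [mem_iInter]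
    rfl
  unfold ClosedRel
  rw [h]
  exact isClosed_iInter fun r => isClosed_iInter fun _ => isClosed_iInter fun hR => hR.1

def componentRel (r : X → X → Prop) (a b : X) : Prop :=
  b ∈ connectedComponentIn {y | r a y} a

lemma equivalence_componentRel {r : X → X → Prop} (hr : Equivalence r) :
    Equivalence (componentRel r) := by
  have hclass : ∀ {a b}, r a b → {y | r a y} = {y | r b y} := fun hab =>
    ext fun _ => ⟨hr.trans (hr.symm hab), hr.trans hab⟩
  refine ⟨fun a => mem_connectedComponentIn (hr.refl a), fun {a b} h => ?_,
    fun {a b c} h₁ h₂ => ?_⟩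
  · unfold componentRel
    rw [← hclass (connectedComponentIn_subset _ _ h), ← connectedComponentIn_eq h]
    exact mem_connectedComponentIn (hr.refl a)
  · unfold componentRel at *
    rwa [connectedComponentIn_eq h₁, hclass (connectedComponentIn_subset _ _ h₁)]

lemma closedRel_componentRel {X : Type*} [MetricSpace X] [CompactSpace X] {r : X → X → Prop}
    (hr : ∀ x, r x x) (hrc : ClosedRel r) : ClosedRel (componentRel r) := by
  have hclass : ∀ a, IsClosed {y | r a y} := fun a => hrc.preimage (Continuous.prodMk_right a)
  refine IsSeqClosed.isClosed fun u p hu hup => ?_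
  set Q : ℕ → Set X := fun k => connectedComponentIn {y | r (u k).1 y} (u k).1
  have hQ : ∀ k, (u k).1 ∈ Q k := fun k => mem_connectedComponentIn (hr _)
  obtain ⟨C, hC, φ, hφ, hQC⟩ := exists_subseq_tendsto_hausdorffEDist
    (fun k => (hclass _).connectedComponentIn _) (fun k => ⟨_, hQ k⟩)
  have hu₁ : Tendsto (fun k => (u (φ k)).1) atTop (𝓝 p.1) :=
    ((continuous_fst.tendsto p).comp hup).comp hφ.tendsto_atTop
  have hu₂ : Tendsto (fun k => (u (φ k)).2) atTop (𝓝 p.2) :=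
    ((continuous_snd.tendsto p).comp hup).comp hφ.tendsto_atTop
  have hp₁ : p.1 ∈ C := mem_of_tendsto_hausdorffEDist hC.isClosed hQC (fun _ => hQ _) hu₁
  have hp₂ : p.2 ∈ C := mem_of_tendsto_hausdorffEDist hC.isClosed hQC (fun k => hu (φ k)) hu₂
  have hCr : {p.1} ×ˢ C ⊆ {q : X × X | r q.1 q.2} := by
    refine subset_of_tendsto_hausdorffEDist hrc ?_ (tendsto_hausdorffEDist_singleton_prod hu₁ hQC)
    rintro k ⟨a, b⟩ ⟨rfl, hb⟩
    exact connectedComponentIn_subset {y | r (u (φ k)).1 y} _ hb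
  have hCconn : IsPreconnected C :=
    isPreconnected_of_tendsto_hausdorffEDist (fun _ => isPreconnected_connectedComponentIn) hC hQC
  exact hCconn.subset_connectedComponentIn hp₁
    (fun z hz => hCr (mk_mem_prod (mem_singleton _) hz)) hp₂

lemma isPreconnected_setOf_finestRel {X : Type*} [MetricSpace X] [CompactSpace X]
    {A : Set (Set X)} (hA : ∀ a ∈ A, IsPreconnected a) (x : X) :
    IsPreconnected {y | finestRel A x y} := by
  have hr := equivalence_finestRel A
  have hresp : Respects A (componentRel (finestRel A)) :=
    ⟨closedRel_componentRel hr.refl (closedRel_finestRel A), fun a ha y hy z hz =>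
      (hA a ha).subset_connectedComponentIn hy
        (fun w hw => (fun _ _ hR => hR.2 a ha y hy w hw : finestRel A y w)) hz⟩
  have hclass : {y | finestRel A x y} = connectedComponentIn {y | finestRel A x y} x :=
    subset_antisymm (fun y hy => hy _ (equivalence_componentRel hr) hresp)
      (connectedComponentIn_subset _ _)
  rw [hclass]
  exact isPreconnected_connectedComponentIn

end FinestRel

lemma exists_lt_dist_of_lt_diam {α : Type*} [PseudoMetricSpace α] {s : Set α} {r : ℝ}
    (hr : 0 ≤ r) (h : r < diam s) : ∃ x ∈ s, ∃ y ∈ s, r < dist x y := by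
  by_contra! hle
  exact (diam_le_of_forall_dist_le hr hle).not_gt h

lemma exists_isLimCont_of_pairwise_disjoint {X : Type*} [MetricSpace X] [CompactSpace X]
    {P : ℕ → Set X} (hP : ∀ n, IsCompact (P n) ∧ IsConnected (P n))
    (hdisj : Pairwise (Disjoint on P)) {a b : ℕ → X} (ha : ∀ n, a n ∈ P n)
    (hb : ∀ n, b n ∈ P n) :
    ∃ C, IsLimCont C ∧ ∃ x ∈ C, ∃ y ∈ C, ∃ φ : ℕ → ℕ,
      Tendsto (a ∘ φ) atTop (𝓝 x) ∧ Tendsto (b ∘ φ) atTop (𝓝 y) := by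
  obtain ⟨⟨x, y⟩, ψ, hψ, hab⟩ := CompactSpace.tendsto_subseq fun n => (a n, b n)
  obtain ⟨C, hC, φ, hφ, hPC⟩ := exists_subseq_tendsto_hausdorffEDist (F := P ∘ ψ)
    (fun _ => (hP _).1.isClosed) (fun n => ⟨_, ha (ψ n)⟩)
  have hax : Tendsto (a ∘ ψ ∘ φ) atTop (𝓝 x) :=
    ((continuous_fst.tendsto _).comp hab).comp hφ.tendsto_atTop
  have hby : Tendsto (b ∘ ψ ∘ φ) atTop (𝓝 y) :=
    ((continuous_snd.tendsto _).comp hab).comp hφ.tendsto_atTop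
  have hxC : x ∈ C := mem_of_tendsto_hausdorffEDist hC.isClosed hPC (fun _ => ha _) hax
  have hyC : y ∈ C := mem_of_tendsto_hausdorffEDist hC.isClosed hPC (fun _ => hb _) hby
  have hCconn : IsConnected C := ⟨⟨x, hxC⟩,
    isPreconnected_of_tendsto_hausdorffEDist (fun _ => (hP _).2.isPreconnected) hC hPC⟩
  exact ⟨C, ⟨hC, hCconn, P ∘ ψ ∘ φ, fun _ => hP _,
    hdisj.comp_of_injective (hψ.comp hφ).injective, hPC⟩, x, hxC, y, hyC, ψ ∘ φ, hax, hby⟩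

lemma finSus_of_const_on_isLimCont {X Y : Type*} [MetricSpace X] [CompactSpace X]
    [MetricSpace Y] {m : X → Y} (hmc : Continuous m) (hms : Surjective m)
    (hfib : ∀ y, IsConnected (m ⁻¹' {y}))
    (hlim : ∀ C, IsLimCont C → ∀ x ∈ C, ∀ y ∈ C, m x = m y) : FinSus Y := by
  intro ε hε S hS hdisj
  by_contra hinf
  set K : ℕ ↪ S := Set.Infinite.natEmbedding S hinf
  have hP : ∀ n, IsCompact (m ⁻¹' K n) ∧ IsConnected (m ⁻¹' K n) := fun n => by
    obtain ⟨hKc, hKconn, -⟩ := hS _ (K n).2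
    exact ⟨(hKc.isClosed.preimage hmc).isCompact,
      (IsQuotientMap.of_surjective_continuous hms hmc).isCoinducing.isConnected_preimage_of_isClosed
        hfib hKc.isClosed hKconn⟩
  have hfar : ∀ n, ∃ a ∈ m ⁻¹' K n, ∃ b ∈ m ⁻¹' K n, ε / 2 < dist (m a) (m b) := by
    intro n
    obtain ⟨p, hp, q, hq, hpq⟩ :=
      exists_lt_dist_of_lt_diam (half_pos hε).le ((half_lt_self hε).trans_le (hS _ (K n).2).2.2)
    obtain ⟨a, rfl⟩ := hms p
    obtain ⟨b, rfl⟩ := hms q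
    exact ⟨a, hp, b, hq, hpq⟩
  choose a ha b hb hab using hfar
  have hPdisj : Pairwise (Disjoint on fun n => m ⁻¹' K n) := fun i j hij =>
    (hdisj (K i).2 (K j).2 fun h => hij (K.injective (Subtype.ext h))).preimage m
  obtain ⟨C, hC, x, hx, y, hy, φ, hax, hby⟩ :=
    exists_isLimCont_of_pairwise_disjoint hP hPdisj ha hb
  have hxy : ε / 2 ≤ dist (m x) (m y) :=
    ge_of_tendsto' (((hmc.tendsto x).comp hax).dist ((hmc.tendsto y).comp hby))
      fun k => (hab (φ k)).le
  rw [hlim C hC x hx y hy, dist_self] at hxy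
  linarith

theorem quotient_by_limit_continua_finSus_general
    {X : Type*} [MetricSpace X] [CompactSpace X]
    {Y : Type*} [MetricSpace Y]
    (m : X → Y) (hmc : Continuous m) (hms : Function.Surjective m)
    (hfib : ∀ x y : X, m x = m y ↔ finestRel {C : Set X | IsLimCont C} x y) :
    FinSus Y := by
  refine finSus_of_const_on_isLimCont hmc hms (fun y => ?_)
    fun C hC x hx y hy => (hfib x y).2 fun _ _ hr => hr.2 C hC x hx y hy
  obtain ⟨x, rfl⟩ := hms y
  have hfiber : m ⁻¹' {m x} = {y | finestRel {C : Set X | IsLimCont C} x y} := by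
    ext y
    exact eq_comm.trans (hfib x y)
  rw [hfiber]
  exact ⟨⟨x, (equivalence_finestRel _).refl x⟩,
    isPreconnected_setOf_finestRel (fun C hC => hC.2.1.isPreconnected) x⟩

/-- the quotient of a compactum by the finest closed equivalence relation
respecting the family of limit continua is finitely Suslinian.  The quotient is realized
by a continuous surjection `m` onto a compact metric space whose fibers are exactly the
classes of the relation. -/
theorem quotient_by_limit_continua_finSus
    {X : Type*} [MetricSpace X] [CompactSpace X]
    {Y : Type*} [MetricSpace Y] [CompactSpace Y]
    (m : X → Y) (hmc : Continuous m) (hms : Function.Surjective m)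
    (hfib : ∀ x y : X, m x = m y ↔ finestRel {C : Set X | IsLimCont C} x y) :
    FinSus Y :=
  quotient_by_limit_continua_finSus_general m hmc hms hfib
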